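/- For any 0 < δ < 1/2, with α := √(1-δ²), the KL divergence between the Gaussian distributions N(αμ, δ²·I_d) and N(μ/α, (δ/α)²·I_d) on ℝ^d satisfies D_KL(N(αμ, δ²I_d) || N(μ/α, (δ/α)²I_d)) ≤ (‖μ‖²/2 + d/6)·δ². -/

import Mathlib

/-!
With `x = δ²` and `α² = 1 - x`, the variance ratio is `α² = 1 - x`, the mean term is
`(α - 1/α)² ‖μ‖² / (2δ²/α²) = ‖μ‖² x / 2` and the log term is `-(d/2) log (1 - x)`.
So the claim reduces to `-x - log (1 - x) ≤ x / 3`, which follows from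
`-log (1 - x) ≤ x / (1 - x) ≤ 4x/3` for `0 ≤ x ≤ 1/4`.
-/

open Real

lemma neg_log_one_sub_le_div {x : ℝ} (hx : x < 1) : -log (1 - x) ≤ x / (1 - x) := by
  have h := one_sub_inv_le_log_of_pos (sub_pos.mpr hx)
  have hinv : 1 - (1 - x)⁻¹ = -(x / (1 - x)) := by
    field_simp [(sub_pos.mpr hx).ne']
    ring
  linarith

lemma neg_log_one_sub_le {x : ℝ} (hx0 : 0 ≤ x) (hx : x ≤ 1 / 4) : -log (1 - x) ≤ 4 / 3 * x := by
  have h1x : 0 < 1 - x := by linarith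
  calc -log (1 - x) ≤ x / (1 - x) := neg_log_one_sub_le_div (by linarith)
    _ ≤ 4 / 3 * x := by rw [div_le_iff₀ h1x]; nlinarith

lemma norm_smul_sub_one_div_smul_sq_div {E : Type*} [NormedAddCommGroup E] [NormedSpace ℝ E]
    (μ : E) {α δ : ℝ} (hα : α ≠ 0) (hδ : δ ≠ 0) :
    ‖α • μ - (1 / α) • μ‖ ^ 2 / (2 * (δ / α) ^ 2) = (α ^ 2 - 1) ^ 2 / (2 * δ ^ 2) * ‖μ‖ ^ 2 := by
  rw [← sub_smul, norm_smul, mul_pow, Real.norm_eq_abs, sq_abs]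
  field_simp

/-- For `0 < δ < 1/2` and `α := √(1-δ²)`, the (closed-form) KL divergence between
`N(αμ, δ²I_d)` and `N(μ/α, (δ/α)²I_d)`, namely
`(d/2)(σ₁²/σ₂² - 1) + ‖m₁ - m₂‖²/(2σ₂²) + d·log(σ₂/σ₁)`, is at most `(‖μ‖²/2 + d/6)·δ²`. -/
theorem stmt1 (d : ℕ) (μ : EuclideanSpace ℝ (Fin d)) (δ : ℝ) (hδ0 : 0 < δ) (hδ : δ < 1/2) :
    (d / 2 : ℝ) * (δ ^ 2 / (δ / Real.sqrt (1 - δ ^ 2)) ^ 2 - 1)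
      + ‖(Real.sqrt (1 - δ ^ 2)) • μ - (1 / Real.sqrt (1 - δ ^ 2)) • μ‖ ^ 2
          / (2 * (δ / Real.sqrt (1 - δ ^ 2)) ^ 2)
      + d * Real.log ((δ / Real.sqrt (1 - δ ^ 2)) / δ)
    ≤ (‖μ‖ ^ 2 / 2 + d / 6) * δ ^ 2 := by
  have hδ2 : δ ^ 2 ≤ 1 / 4 := by nlinarith
  have h1δ : 0 < 1 - δ ^ 2 := by linarith
  set α := √(1 - δ ^ 2) with hα
  have hα0 : 0 < α := sqrt_pos.mpr h1δ
  have hα2 : α ^ 2 = 1 - δ ^ 2 := sq_sqrt h1δ.le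
  have hratio : δ ^ 2 / (δ / α) ^ 2 = 1 - δ ^ 2 := by
    rw [← hα2]; field_simp
  have hmean : ‖α • μ - (1 / α) • μ‖ ^ 2 / (2 * (δ / α) ^ 2) = ‖μ‖ ^ 2 / 2 * δ ^ 2 := by
    rw [norm_smul_sub_one_div_smul_sq_div μ hα0.ne' hδ0.ne', hα2]
    field_simp
    ring
  have hlog : log ((δ / α) / δ) = -log (1 - δ ^ 2) / 2 := by
    rw [div_div_cancel_left' hδ0.ne', log_inv, hα, log_sqrt h1δ.le, neg_div]
  rw [hratio, hmean, hlog]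
  have hkey := mul_le_mul_of_nonneg_left (neg_log_one_sub_le (sq_nonneg δ) hδ2)
    (Nat.cast_nonneg (α := ℝ) d)
  linarith
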